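/- For every ε ∈ (0,1] and every integer m ≥ 1, the function b_{m,ε} is nondecreasing on [1, ∞): if 1 ≤ x ≤ y then b_{m,ε}(x) ≤ b_{m,ε}(y). -/

import Mathlib

/-!
Since `log (Phi m x) = Phi (m + 1) x - 1`, we have `Phi m x ^ (-ε) = exp (ε - ε * Phi (m + 1) x)`.
Each `Phi k` is concave on `[1, ∞)`, being obtained from the identity by composing with the
concave increasing map `t ↦ 1 + log t`; hence `Phi m ^ (-ε)` is convex there. The forward
difference `g x - g (x + 1)` of a convex function `g` is nonincreasing, and here it is positive
because `Phi m` is strictly increasing. Since `b_{m,ε}` is `-log` of this difference divided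
by `ε`, it is nondecreasing.
-/

/-- The iterated logarithm functions: `Phi 0 x = x`, `Phi (m+1) x = 1 + log (Phi m x)`,
so that `Phi 1 x = φ(x) = 1 + log x` and `Phi m = φ(Phi (m−1))`. -/
noncomputable def Phi : ℕ → ℝ → ℝ
  | 0, x => x
  | m + 1, x => 1 + Real.log (Phi m x)

/-- The boundary `b_{m,ε}(x) = −log [1/(ε Φ_m(x)^ε) − 1/(ε Φ_m(x+1)^ε)]`. -/
noncomputable def bfun (m : ℕ) (ε : ℝ) (x : ℝ) : ℝ :=
  -Real.log (1 / (ε * Phi m x ^ ε) - 1 / (ε * Phi m (x + 1) ^ ε))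

open Real Set

section Composition

variable {𝕜 E F β : Type*} [Semiring 𝕜] [PartialOrder 𝕜]
  [AddCommMonoid E] [AddCommMonoid F] [PartialOrder F] [SMul 𝕜 E] [SMul 𝕜 F]
  [AddCommMonoid β] [PartialOrder β] [SMul 𝕜 β]
  {s : Set E} {t : Set F} {f : E → F} {g : F → β}

theorem ConvexOn.comp_of_mapsTo (hg : ConvexOn 𝕜 t g) (hf : ConvexOn 𝕜 s f)
    (hst : MapsTo f s t) (hg' : MonotoneOn g t) : ConvexOn 𝕜 s (g ∘ f) :=
  ⟨hf.1, fun _ hx _ hy _ _ ha hb hab =>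
    (hg' (hst <| hf.1 hx hy ha hb hab) (hg.1 (hst hx) (hst hy) ha hb hab) <|
      hf.2 hx hy ha hb hab).trans <| hg.2 (hst hx) (hst hy) ha hb hab⟩

theorem ConcaveOn.comp_of_mapsTo (hg : ConcaveOn 𝕜 t g) (hf : ConcaveOn 𝕜 s f)
    (hst : MapsTo f s t) (hg' : MonotoneOn g t) : ConcaveOn 𝕜 s (g ∘ f) :=
  ⟨hf.1, fun _ hx _ hy _ _ ha hb hab =>
    (hg.2 (hst hx) (hst hy) ha hb hab).trans <|
      hg' (hg.1 (hst hx) (hst hy) ha hb hab) (hst <| hf.1 hx hy ha hb hab) <|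
        hf.2 hx hy ha hb hab⟩

end Composition

theorem ConvexOn.add_le_add_of_le {𝕜 : Type*} [Field 𝕜] [LinearOrder 𝕜] [IsStrictOrderedRing 𝕜]
    {s : Set 𝕜} {f : 𝕜 → 𝕜} (hf : ConvexOn 𝕜 s f) {x y h : 𝕜} (hx : x ∈ s) (hyh : y + h ∈ s)
    (hxy : x ≤ y) (hh : 0 ≤ h) : f (x + h) + f y ≤ f x + f (y + h) := by
  rcases (sub_nonneg.2 (le_add_of_le_of_nonneg hxy hh) : 0 ≤ y + h - x).eq_or_lt with hd | hd
  · obtain rfl : h = 0 := by linarith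
    obtain rfl : y = x := by linarith
    simp
  set d := y + h - x
  -- `x + h` and `y` are the convex combinations of `x` and `y + h` with swapped weights.
  have hsum : (y - x) / d + h / d = 1 := by field_simp; ring
  have hsum' : h / d + (y - x) / d = 1 := by rw [add_comm, hsum]
  have h₁ := hf.2 hx hyh (div_nonneg (sub_nonneg.2 hxy) hd.le) (div_nonneg hh hd.le) hsum
  have h₂ := hf.2 hx hyh (div_nonneg hh hd.le) (div_nonneg (sub_nonneg.2 hxy) hd.le) hsum'
  have e₁ : ((y - x) / d) • x + (h / d) • (y + h) = x + h := by
    rw [smul_eq_mul, smul_eq_mul]; field_simp; simp only [d]; ring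
  have e₂ : (h / d) • x + ((y - x) / d) • (y + h) = y := by
    rw [smul_eq_mul, smul_eq_mul]; field_simp; simp only [d]; ring
  rw [e₁, smul_eq_mul, smul_eq_mul] at h₁
  rw [e₂, smul_eq_mul, smul_eq_mul] at h₂
  linear_combination h₁ + h₂ + (f x + f (y + h)) * hsum

lemma one_le_Phi (m : ℕ) {x : ℝ} (hx : 1 ≤ x) : 1 ≤ Phi m x := by
  induction m with
  | zero => exact hx
  | succ m ih => exact le_add_of_nonneg_right (log_nonneg ih)

lemma strictMonoOn_Phi (m : ℕ) : StrictMonoOn (Phi m) (Ici 1) := by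
  induction m with
  | zero => exact strictMono_id.strictMonoOn _
  | succ m ih =>
    intro x hx y hy hxy
    simp only [Phi]
    gcongr
    exacts [zero_lt_one.trans_le (one_le_Phi m hx), ih hx hy hxy]

lemma concaveOn_Phi (m : ℕ) : ConcaveOn ℝ (Ici 1) (Phi m) := by
  induction m with
  | zero => exact concaveOn_id (convex_Ici 1)
  | succ m ih =>
    have hlog : ConcaveOn ℝ (Ioi 0) (fun t => 1 + log t) :=
      (strictConcaveOn_log_Ioi.concaveOn.add_const 1).congr fun t _ => add_comm _ _
    exact hlog.comp_of_mapsTo ih (fun x hx => zero_lt_one.trans_le (one_le_Phi m hx))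
      fun a ha b _ hab => by dsimp only; gcongr

lemma convexOn_inv_Phi_rpow (m : ℕ) {ε : ℝ} (hε : 0 ≤ ε) :
    ConvexOn ℝ (Ici 1) (fun x => (Phi m x ^ ε)⁻¹) := by
  have hconv : ConvexOn ℝ (Ici 1) (fun x => ε - ε * Phi (m + 1) x) :=
    (((concaveOn_Phi (m + 1)).neg.smul hε).add_const ε).congr fun x _ => by
      simp only [Pi.add_apply, Pi.neg_apply, smul_eq_mul]; ring
  refine (convexOn_exp.comp_of_mapsTo hconv (mapsTo_univ _ _)
    (exp_monotone.monotoneOn _)).congr fun x hx => ?_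
  have hpos : 0 < Phi m x := zero_lt_one.trans_le (one_le_Phi m hx)
  simp only [Function.comp, Phi, rpow_def_of_pos hpos, ← exp_neg]
  ring_nf

theorem statement11_general (ε : ℝ) (hε0 : 0 < ε) (m : ℕ)
    (x y : ℝ) (hx : 1 ≤ x) (hxy : x ≤ y) :
    bfun m ε x ≤ bfun m ε y := by
  set g : ℝ → ℝ := fun z => (Phi m z ^ ε)⁻¹
  have hbfun : ∀ z, bfun m ε z = -log ((g z - g (z + 1)) / ε) := fun z => by
    simp only [bfun, g, mul_inv, div_eq_mul_inv]
    ring_nf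
  have hy : 1 ≤ y := hx.trans hxy
  have hgap_pos : 0 < g y - g (y + 1) := by
    have hPhi := strictMonoOn_Phi m hy (show 1 ≤ y + 1 by linarith) (lt_add_one y)
    have hpos := zero_lt_one.trans_le (one_le_Phi m hy)
    simp only [g, sub_pos]
    gcongr
  have hgap_anti : g y - g (y + 1) ≤ g x - g (x + 1) := by
    have := (convexOn_inv_Phi_rpow m hε0.le).add_le_add_of_le hx
      (show y + 1 ∈ Ici 1 by simp only [mem_Ici]; linarith) hxy zero_le_one
    linarith
  rw [hbfun, hbfun, neg_le_neg_iff]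
  exact log_le_log (div_pos hgap_pos hε0) (div_le_div_of_nonneg_right hgap_anti hε0.le)

/-- For every `ε ∈ (0,1]` and integer `m ≥ 1`, the boundary `b_{m,ε}` is
nondecreasing on `[1, ∞)`. -/
theorem statement11 (ε : ℝ) (hε0 : 0 < ε) (hε1 : ε ≤ 1) (m : ℕ) (hm : 1 ≤ m)
    (x y : ℝ) (hx : 1 ≤ x) (hxy : x ≤ y) :
    bfun m ε x ≤ bfun m ε y :=
  statement11_general ε hε0 m x y hx hxy
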